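/- arXiv:0810.5562 — 2 statements merged into one kernel-verified Lean document; each statement's English description precedes it below -/
import Mathlib

section
/- Let σ assign to the basis quaternions of the real quaternion algebra ℍ the triple degrees σ(1) = (0,0,0), σ(i) = (0,1,1), σ(j) = (1,0,1), σ(k) = (1,1,0) (viewed as vectors in ℤ³). Then for any two homogeneous quaternions p = a•x and q = b•y, where a, b ∈ ℝ and x, y ∈ {1, i, j, k}, the usual quaternion product satisfies the graded commutativity condition p * q = ((-1)^⟨σ(x), σ(y)⟩) • (q * p), where ⟨·,·⟩ denotes the standard scalar product of 3-vectors in ℤ³. -/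
open Quaternion

/-- The canonical basis `1, i, j, k` of the real quaternion algebra. -/
noncomputable def quatBasis : Fin 4 → ℍ[ℝ]
  | 0 => 1
  | 1 => ⟨0, 1, 0, 0⟩
  | 2 => ⟨0, 0, 1, 0⟩
  | 3 => ⟨0, 0, 0, 1⟩

/-- The triple degree `σ(1) = (0,0,0)`, `σ(i) = (0,1,1)`, `σ(j) = (1,0,1)`,
`σ(k) = (1,1,0)`, viewed as vectors in `ℤ³`. -/
def tripleDeg : Fin 4 → Fin 3 → ℤ
  | 0 => ![0, 0, 0]
  | 1 => ![0, 1, 1]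
  | 2 => ![1, 0, 1]
  | 3 => ![1, 1, 0]

/-!
The real unit `1` is central and every basis quaternion commutes with itself, while two
distinct imaginary units anticommute. The degrees are chosen so that `⟨σ(x), σ(y)⟩` is `0`
when `x` or `y` is `1`, `2` when `x = y ≠ 1`, and `1` for distinct imaginary units, so its
parity records exactly this sign. Real scalars are central and factor out of both sides.
-/

theorem tripleDeg_dot (m n : Fin 4) :
    ∑ t : Fin 3, tripleDeg m t * tripleDeg n t =
      if m = 0 ∨ n = 0 then 0 else if m = n then 2 else 1 := by
  fin_cases m <;> fin_cases n <;> rfl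

theorem quatBasis_commute {m n : Fin 4} (h : m = 0 ∨ n = 0 ∨ m = n) :
    Commute (quatBasis m) (quatBasis n) := by
  rcases h with rfl | rfl | rfl
  · exact Commute.one_left _
  · exact Commute.one_right _
  · exact Commute.refl _

theorem quatBasis_mul_anticomm {m n : Fin 4} (hm : m ≠ 0) (hn : n ≠ 0) (hmn : m ≠ n) :
    quatBasis m * quatBasis n = -(quatBasis n * quatBasis m) := by
  fin_cases m <;> fin_cases n <;> first | contradiction |
    (apply Quaternion.ext <;>
      simp only [Quaternion.re_mul, Quaternion.imI_mul, Quaternion.imJ_mul, Quaternion.imK_mul,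
        Quaternion.re_neg, Quaternion.imI_neg, Quaternion.imJ_neg, Quaternion.imK_neg] <;>
      simp [quatBasis])

theorem quatBasis_mul_eq_neg_one_zpow_smul (m n : Fin 4) :
    quatBasis m * quatBasis n =
      ((-1 : ℝ) ^ (∑ t : Fin 3, tripleDeg m t * tripleDeg n t)) •
        (quatBasis n * quatBasis m) := by
  rw [tripleDeg_dot]
  split_ifs with h0 hmn
  · rw [zpow_zero, one_smul, quatBasis_commute (by tauto)]
  · rw [hmn, zpow_two, neg_one_mul, neg_neg, one_smul]
  · push Not at h0
    rw [zpow_one, neg_one_smul, quatBasis_mul_anticomm h0.1 h0.2 hmn]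

/-- For any two homogeneous quaternions `p = a • x`, `q = b • y` with `x, y` basis
quaternions, one has `p * q = (-1)^⟨σ(x),σ(y)⟩ • (q * p)`. -/
theorem quaternion_graded_commutativity (a b : ℝ) (m n : Fin 4) :
    (a • quatBasis m) * (b • quatBasis n) =
      ((-1 : ℝ) ^ (∑ t : Fin 3, tripleDeg m t * tripleDeg n t)) •
        ((b • quatBasis n) * (a • quatBasis m)) := by
  rw [smul_mul_smul_comm, smul_mul_smul_comm, quatBasis_mul_eq_neg_one_zpow_smul m n,
    smul_comm (a * b), mul_comm b a]
end

section
/- Let R be a ring, let Γ be an additive abelian group, and let b : Γ → Γ → ℤ/2ℤ be additive in each argument. Let e₁, e₂, e₄ ∈ R and set e₃ = e₁ * e₂. Suppose e₄ anticommutes with e₁, e₂ and e₃ (that is, e₄ * eₗ = -(eₗ * e₄) for ℓ = 1, 2, 3), and suppose 2•(e₁ * e₄) ≠ 0, 2•(e₂ * e₄) ≠ 0 and 2•(e₃ * e₄) ≠ 0. Then there exist no degrees γ₁, γ₂, γ₃, γ₄ ∈ Γ with γ₃ = γ₁ + γ₂ such that the graded commutativity relation eₘ * eₙ = (-1)^{b(γₘ,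 γₙ)} • (eₙ * eₘ) holds for all m, n ∈ {1, 2, 3, 4} (where (-1)^c means 1 if c = 0 and -1 if c = 1 in ℤ/2ℤ). In particular, the algebra of octonions, which contains such elements e₁, e₂, e₃, e₄ among its imaginary units, cannot be realized as a graded commutative algebra over any abelian group. -/
/-!
Graded commutativity with `e₄` forces `b (γ₄, γₗ) = 1` for `ℓ = 1, 2, 3`: an even sign would make
`eₗ e₄` commute and anticommute, so `2 • (eₗ e₄) = 0`. But additivity of `b` in its second argument
and `γ₃ = γ₁ + γ₂` give `b (γ₄, γ₃) = 1 + 1 = 0` in `ℤ/2ℤ`.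
-/

lemma eq_one_of_anticomm_of_mul_eq_sign_smul {R : Type*} [Ring R] {x y : R} {c : ZMod 2}
    (hanti : y * x = -(x * y)) (hsign : y * x = (if c = 0 then (1 : ℤ) else -1) • (x * y))
    (hne : (2 : ℤ) • (x * y) ≠ 0) : c = 1 := by
  obtain rfl | rfl := (by decide : ∀ c : ZMod 2, c = 0 ∨ c = 1) c
  · rw [if_pos rfl, one_smul] at hsign
    rw [two_zsmul] at hne
    exact absurd (add_eq_zero_iff_eq_neg.mpr (hsign.symm.trans hanti)) hne
  · rfl

theorem no_graded_commutative_structure_general {R : Type*} [Ring R] {Γ : Type*} [AddCommGroup Γ]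
    (b : Γ → Γ → ZMod 2)
    (hbr : ∀ x y z : Γ, b x (y + z) = b x y + b x z)
    (e₁ e₂ e₃ e₄ : R)
    (h14 : e₄ * e₁ = -(e₁ * e₄)) (h24 : e₄ * e₂ = -(e₂ * e₄)) (h34 : e₄ * e₃ = -(e₃ * e₄))
    (hne1 : (2 : ℤ) • (e₁ * e₄) ≠ 0) (hne2 : (2 : ℤ) • (e₂ * e₄) ≠ 0)
    (hne3 : (2 : ℤ) • (e₃ * e₄) ≠ 0) :
    ¬ ∃ γ : Fin 4 → Γ, γ 2 = γ 0 + γ 1 ∧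
      ∀ m n : Fin 4,
        ![e₁, e₂, e₃, e₄] m * ![e₁, e₂, e₃, e₄] n =
          (if b (γ m) (γ n) = 0 then (1 : ℤ) else -1) •
            (![e₁, e₂, e₃, e₄] n * ![e₁, e₂, e₃, e₄] m) := by
  rintro ⟨γ, hγ, hgraded⟩
  have hb1 := eq_one_of_anticomm_of_mul_eq_sign_smul h14 (hgraded 3 0) hne1
  have hb2 := eq_one_of_anticomm_of_mul_eq_sign_smul h24 (hgraded 3 1) hne2
  have hb3 := eq_one_of_anticomm_of_mul_eq_sign_smul h34 (hgraded 3 2) hne3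
  rw [hγ, hbr, hb1, hb2] at hb3
  exact absurd hb3 (by decide)

/-- Let `R` be a ring, `Γ` an abelian group and `b : Γ → Γ → ℤ/2ℤ` biadditive.
If `e₁, e₂, e₄ ∈ R`, `e₃ = e₁ * e₂`, `e₄` anticommutes with `e₁, e₂, e₃`, and
`2 • (eₗ * e₄) ≠ 0` for `ℓ = 1, 2, 3`, then there are no degrees
`γ₁, γ₂, γ₃, γ₄ ∈ Γ` with `γ₃ = γ₁ + γ₂` satisfying the graded commutativity
relation `eₘ * eₙ = (-1)^{b(γₘ,γₙ)} • (eₙ * eₘ)` for all `m, n`.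
In particular, the octonions cannot be realized as a graded commutative algebra. -/
theorem no_graded_commutative_structure {R : Type*} [Ring R] {Γ : Type*} [AddCommGroup Γ]
    (b : Γ → Γ → ZMod 2)
    (hbl : ∀ x y z : Γ, b (x + y) z = b x z + b y z)
    (hbr : ∀ x y z : Γ, b x (y + z) = b x y + b x z)
    (e₁ e₂ e₃ e₄ : R) (he₃ : e₃ = e₁ * e₂)
    (h14 : e₄ * e₁ = -(e₁ * e₄)) (h24 : e₄ * e₂ = -(e₂ * e₄)) (h34 : e₄ * e₃ = -(e₃ * e₄))
    (hne1 : (2 : ℤ) • (e₁ * e₄) ≠ 0) (hne2 : (2 : ℤ) • (e₂ * e₄) ≠ 0)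
    (hne3 : (2 : ℤ) • (e₃ * e₄) ≠ 0) :
    ¬ ∃ γ : Fin 4 → Γ, γ 2 = γ 0 + γ 1 ∧
      ∀ m n : Fin 4,
        ![e₁, e₂, e₃, e₄] m * ![e₁, e₂, e₃, e₄] n =
          (if b (γ m) (γ n) = 0 then (1 : ℤ) else -1) •
            (![e₁, e₂, e₃, e₄] n * ![e₁, e₂, e₃, e₄] m) :=
  no_graded_commutative_structure_general b hbr e₁ e₂ e₃ e₄ h14 h24 h34 hne1 hne2 hne3
end
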